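/- arXiv:1004.2972 — 7 statements merged into one kernel-verified Lean document; each statement's English description precedes it below -/
import Mathlib

section
/- Let G be a finite simple graph with vertex set V and edge set E, let S' ⊆ E, and let k be a natural number. Let G' be obtained from G by subdividing every edge of S' exactly once: for each edge e = uv ∈ S', delete e and add a new vertex x_e adjacent exactly to u and v; let S be the set of new vertices {x_e : e ∈ S'}. Then there exists T ⊆ V with |T| ≤ k such that no simple cycle of the subgraph of G induced on V ∖ T contains an edge of S', if and only if there exists T' ⊆ V(G') with |T'| ≤ k such that no simple cycle of the subgraph of G' induced on V(G') ∖ T' contains a vertex of S. -/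
/-!
An edge `uv` lies on a cycle iff `u` and `v` stay connected once `uv` is deleted, and a vertex
lies on a cycle iff one of its edges does. Both conditions thus become reachability statements,
and reachability transfers between `G - T` and `G' - T'` one adjacency at a time: a step of `G'`
through the subdivision vertex `x_f` is a step of `G` along `f`, and conversely. For one
direction take `T' = T`; for the other, replace each subdivision vertex in `T'` by an endpoint
of its edge.
-/

namespace SimpleGraph

open Sum

variable {V W : Type*}

theorem spanningCoe_induce_adj {G : SimpleGraph V} {s : Set V} {u v : V} :
    (G.induce s).spanningCoe.Adj u v ↔ G.Adj u v ∧ u ∈ s ∧ v ∈ s := by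
  simp only [spanningCoe, map_adj, comap_adj, Function.Embedding.subtype_apply]
  constructor
  · rintro ⟨a, b, h, rfl, rfl⟩
    exact ⟨h, a.2, b.2⟩
  · rintro ⟨h, hu, hv⟩
    exact ⟨⟨u, hu⟩, ⟨v, hv⟩, h, rfl, rfl⟩

theorem exists_isCycle_avoiding_iff (G : SimpleGraph V) (T : Set V) (d : Sym2 V) :
    (∃ (w : V) (c : G.Walk w w), c.IsCycle ∧ (∀ x ∈ c.support, x ∉ T) ∧
      d ∈ c.edges) ↔
      ∃ (w : V) (c : (G.induce Tᶜ).spanningCoe.Walk w w), c.IsCycle ∧ d ∈ c.edges := by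
  constructor
  · rintro ⟨w, c, hc, hcT, hd⟩
    have hedges : ∀ e ∈ c.edges, e ∈ (G.induce Tᶜ).spanningCoe.edgeSet := by
      intro e he
      induction e using Sym2.ind with
      | _ a b =>
        exact spanningCoe_induce_adj.2 ⟨c.adj_of_mem_edges he,
          hcT a (c.fst_mem_support_of_mem_edges he), hcT b (c.snd_mem_support_of_mem_edges he)⟩
    exact ⟨w, c.transfer _ hedges, hc.transfer hedges, by rwa [Walk.edges_transfer]⟩
  · rintro ⟨w, c, hc, hd⟩
    refine ⟨w, c.mapLe (spanningCoe_induce_le G _), hc.mapLe _, fun x hx => ?_,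
      by rwa [Walk.edges_mapLe_eq_edges]⟩
    rw [Walk.support_mapLe_eq_support,
      Walk.mem_support_iff_exists_mem_edges_of_not_nil hc.not_nil] at hx
    obtain ⟨e, he, hxe⟩ := hx
    obtain ⟨y, rfl⟩ := Sym2.mem_iff_exists.1 hxe
    exact (spanningCoe_induce_adj.1 (c.adj_of_mem_edges he)).2.1

theorem exists_isCycle_avoiding_iff_reachable (G : SimpleGraph V) (T : Set V) (u v : V) :
    (∃ (w : V) (c : G.Walk w w), c.IsCycle ∧ (∀ x ∈ c.support, x ∉ T) ∧
      s(u, v) ∈ c.edges) ↔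
      (G.induce Tᶜ).spanningCoe.Adj u v ∧
        ((G.induce Tᶜ).spanningCoe.deleteEdges {s(u, v)}).Reachable u v := by
  rw [exists_isCycle_avoiding_iff, adj_and_reachable_delete_edges_iff_exists_cycle]

theorem Reachable.exists_rel {G : SimpleGraph V} {H : SimpleGraph W} {R : V → W → Prop}
    (hR : ∀ ⦃x y a⦄, G.Adj x y → R x a → ∃ b, R y b ∧ H.Reachable a b) {x y : V}
    (hxy : G.Reachable x y) {a : W} (ha : R x a) : ∃ b, R y b ∧ H.Reachable a b := by
  obtain ⟨p⟩ := hxy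
  induction p generalizing a with
  | nil => exact ⟨a, ha, .rfl⟩
  | cons h _ ih =>
    obtain ⟨b, hb, hab⟩ := hR h ha
    obtain ⟨c, hc, hbc⟩ := ih hb
    exact ⟨c, hc, hab.trans hbc⟩

structure IsEdgeSubdivision (G : SimpleGraph V) (S : Set (Sym2 V)) (G' : SimpleGraph (V ⊕ S)) :
    Prop where
  subset_edgeSet : S ⊆ G.edgeSet
  inl_adj_inl_iff (u w : V) : G'.Adj (inl u) (inl w) ↔ G.Adj u w ∧ s(u, w) ∉ S
  inl_adj_inr_iff (u : V) (e : S) : G'.Adj (inl u) (inr e) ↔ u ∈ e.val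
  not_inr_adj_inr (e f : S) : ¬ G'.Adj (inr e) (inr f)

namespace IsEdgeSubdivision

variable {G : SimpleGraph V} {S : Set (Sym2 V)} {G' : SimpleGraph (V ⊕ S)}
  (hG : G.IsEdgeSubdivision S G')
include hG

theorem reachable_of_reachable_inl_inr {T : Set V} {T' : Set (V ⊕ S)}
    (hT : ∀ a ∈ T, inl a ∈ T') {e : S} {u v : V} (he : e.val = s(u, v))
    (h : ((G'.induce T'ᶜ).spanningCoe.deleteEdges {s(inl u, inr e)}).Reachable (inl u) (inr e)) :
    v ∉ T ∧ ((G.induce Tᶜ).spanningCoe.deleteEdges {s(u, v)}).Reachable u v := by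
  -- `R x b`: the vertex `b` of `G - T` stands for `x`; it may not be `u` when `x = x_e`,
  -- since the edge between `u` and `x_e` is deleted.
  let R : V ⊕ S → V → Prop :=
    Sum.elim (· = ·) (fun f b => b ∈ f.val ∧ b ∉ T ∧ (f = e → b ≠ u))
  have hR : ∀ ⦃x y a⦄,
      ((G'.induce T'ᶜ).spanningCoe.deleteEdges {s(inl u, inr e)}).Adj x y → R x a →
        ∃ b, R y b ∧ ((G.induce Tᶜ).spanningCoe.deleteEdges {s(u, v)}).Reachable a b := by
    rintro (x | f) (y | g) a hxy hxa <;>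
      simp only [deleteEdges_adj, spanningCoe_induce_adj, Set.mem_compl_iff,
        Set.mem_singleton_iff] at hxy <;>
      obtain ⟨⟨hxy, hxT, hyT⟩, hne⟩ := hxy
    · obtain rfl : x = a := hxa
      obtain ⟨hxy, hyS⟩ := (hG.inl_adj_inl_iff x y).1 hxy
      have hne : s(x, y) ≠ s(u, v) := fun h => hyS (h ▸ he ▸ e.2)
      exact ⟨y, rfl, Adj.reachable <| deleteEdges_adj.2 ⟨spanningCoe_induce_adj.2
        ⟨hxy, fun hx => hxT (hT x hx), fun hy => hyT (hT y hy)⟩, hne⟩⟩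
    · obtain rfl : x = a := hxa
      refine ⟨x, ⟨(hG.inl_adj_inr_iff x g).1 hxy, fun hx => hxT (hT x hx), ?_⟩, .rfl⟩
      rintro rfl rfl
      exact hne rfl
    · obtain ⟨haf, haT, hau⟩ := hxa
      refine ⟨y, rfl, ?_⟩
      obtain rfl | hay := eq_or_ne a y
      · rfl
      have hf : f.val = s(a, y) :=
        (Sym2.mem_and_mem_iff hay).1 ⟨haf, (hG.inl_adj_inr_iff y f).1 hxy.symm⟩
      have hne : s(a, y) ≠ s(u, v) := by
        intro hfe
        obtain rfl : f = e := Subtype.ext (hf.trans (hfe.trans he.symm))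
        have hyu : y ≠ u := by rintro rfl; exact hne Sym2.eq_swap
        rcases Sym2.eq_iff.1 hfe with ⟨h1, -⟩ | ⟨-, h2⟩
        exacts [hau rfl h1, hyu h2]
      have hay : s(a, y) ∈ G.edgeSet := hf ▸ hG.subset_edgeSet f.2
      exact Adj.reachable <| deleteEdges_adj.2
        ⟨spanningCoe_induce_adj.2 ⟨hay, haT, fun hy => hyT (hT y hy)⟩, hne⟩
    · exact (hG.not_inr_adj_inr f g hxy).elim
  obtain ⟨b, ⟨hbe, hbT, hbu⟩, hub⟩ := h.exists_rel hR (a := u) rfl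
  obtain rfl : b = v := by
    rw [he, Sym2.mem_iff] at hbe
    exact hbe.resolve_left (hbu rfl)
  exact ⟨hbT, hub⟩

theorem exists_isCycle_mem_edges_of_mem_support {T : Set V} {T' : Set (V ⊕ S)}
    (hT : ∀ a ∈ T, inl a ∈ T') {e : S}
    (h : ∃ (w : V ⊕ S) (c : G'.Walk w w), c.IsCycle ∧ (∀ x ∈ c.support, x ∉ T') ∧
      inr e ∈ c.support) :
    ∃ (w : V) (c : G.Walk w w), c.IsCycle ∧ (∀ x ∈ c.support, x ∉ T) ∧
      e.val ∈ c.edges := by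
  obtain ⟨w, c, hc, hcT, he⟩ := h
  obtain ⟨d, hd, hed⟩ := (Walk.mem_support_iff_exists_mem_edges_of_not_nil hc.not_nil).1 he
  obtain ⟨y, rfl⟩ := Sym2.mem_iff_exists.1 hed
  obtain ⟨u, rfl⟩ : ∃ u, y = inl u := by
    rcases y with u | f
    · exact ⟨u, rfl⟩
    · exact (hG.not_inr_adj_inr e f (c.adj_of_mem_edges hd)).elim
  rw [Sym2.eq_swap] at hd
  obtain ⟨hadj, hreach⟩ :=
    (exists_isCycle_avoiding_iff_reachable G' T' (inl u) (inr e)).1 ⟨w, c, hc, hcT, hd⟩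
  obtain ⟨hue, huT, -⟩ := spanningCoe_induce_adj.1 hadj
  have he : e.val = s(u, Sym2.Mem.other ((hG.inl_adj_inr_iff u e).1 hue)) :=
    (Sym2.other_spec _).symm
  have huv : G.Adj u _ := he ▸ hG.subset_edgeSet e.2
  obtain ⟨hvT, hreach⟩ := hG.reachable_of_reachable_inl_inr hT he hreach
  rw [he]
  exact (exists_isCycle_avoiding_iff_reachable G T _ _).2
    ⟨spanningCoe_induce_adj.2 ⟨huv, fun hu => huT (hT u hu), hvT⟩, hreach⟩

variable {T : Set V} {T' : Set (V ⊕ S)} (hinl : ∀ a ∉ T, inl a ∉ T')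
  (hinr : ∀ f : S, (∀ a ∈ f.val, a ∉ T) → inr f ∉ T')
include hinl hinr

theorem spanningCoe_induce_adj_inl_inr {a : V} {f : S} (haf : a ∈ f.val)
    (hf : ∀ b ∈ f.val, b ∉ T) : (G'.induce T'ᶜ).spanningCoe.Adj (inl a) (inr f) :=
  spanningCoe_induce_adj.2 ⟨(hG.inl_adj_inr_iff a f).2 haf, hinl a (hf a haf), hinr f hf⟩

theorem reachable_inl_of_reachable {e : S} {u v : V} (he : e.val = s(u, v))
    (h : ((G.induce Tᶜ).spanningCoe.deleteEdges {s(u, v)}).Reachable u v) :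
    ((G'.induce T'ᶜ).spanningCoe.deleteEdges {s(inl u, inr e)}).Reachable (inl u) (inl v) := by
  refine (h.exists_rel (R := fun a x => x = inl a) ?_ rfl).elim fun _ ⟨hv, h⟩ => hv ▸ h
  rintro a b _ hab rfl
  refine ⟨inl b, rfl, ?_⟩
  simp only [deleteEdges_adj, spanningCoe_induce_adj, Set.mem_compl_iff,
    Set.mem_singleton_iff] at hab
  obtain ⟨⟨hab, haT, hbT⟩, hne⟩ := hab
  by_cases hS : s(a, b) ∈ S
  · set f : S := ⟨s(a, b), hS⟩
    have hfe : f ≠ e := fun hfe => hne ((congrArg Subtype.val hfe).trans he)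
    have hfT : ∀ c ∈ f.val, c ∉ T := by
      rintro c hc
      rcases Sym2.mem_iff.1 hc with rfl | rfl
      exacts [haT, hbT]
    have haf := hG.spanningCoe_induce_adj_inl_inr hinl hinr (Sym2.mem_mk_left a b) hfT
    have hbf := hG.spanningCoe_induce_adj_inl_inr hinl hinr (Sym2.mem_mk_right a b) hfT
    refine (Adj.reachable (v := inr f) ?_).trans (Adj.reachable ?_)
    · exact deleteEdges_adj.2 ⟨haf, by simp [hfe]⟩
    · exact deleteEdges_adj.2 ⟨hbf.symm, by simp [hfe]⟩
  · refine Adj.reachable <|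
      deleteEdges_adj.2 ⟨spanningCoe_induce_adj.2 ⟨?_, ?_, ?_⟩, by simp⟩
    exacts [(hG.inl_adj_inl_iff a b).2 ⟨hab, hS⟩, hinl a haT, hinl b hbT]

theorem exists_isCycle_mem_support_of_mem_edges {e : S}
    (h : ∃ (w : V) (c : G.Walk w w), c.IsCycle ∧ (∀ x ∈ c.support, x ∉ T) ∧
      e.val ∈ c.edges) :
    ∃ (w : V ⊕ S) (c : G'.Walk w w), c.IsCycle ∧ (∀ x ∈ c.support, x ∉ T') ∧
      inr e ∈ c.support := by
  obtain ⟨u, v, he⟩ : ∃ u v, e.val = s(u, v) :=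
    ⟨_, _, (Sym2.other_spec (Sym2.out_fst_mem e.val)).symm⟩
  obtain ⟨w, c, hc, hcT, hce⟩ := h
  rw [he] at hce
  obtain ⟨hadj, hreach⟩ :=
    (exists_isCycle_avoiding_iff_reachable G T u v).1 ⟨w, c, hc, hcT, hce⟩
  obtain ⟨huv, huT, hvT⟩ := spanningCoe_induce_adj.1 hadj
  have heT : ∀ b ∈ e.val, b ∉ T := by
    rw [he]
    rintro b hb
    rcases Sym2.mem_iff.1 hb with rfl | rfl
    exacts [huT, hvT]
  have hue := hG.spanningCoe_induce_adj_inl_inr hinl hinr (he ▸ Sym2.mem_mk_left u v) heT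
  have hve := hG.spanningCoe_induce_adj_inl_inr hinl hinr (he ▸ Sym2.mem_mk_right u v) heT
  have hve' : ((G'.induce T'ᶜ).spanningCoe.deleteEdges {s(inl u, inr e)}).Adj (inl v) (inr e) :=
    deleteEdges_adj.2 ⟨hve, by simp [huv.ne.symm]⟩
  obtain ⟨w, c, hc, hcT, hce⟩ := (exists_isCycle_avoiding_iff_reachable G' T' (inl u) (inr e)).2
    ⟨hue, (hG.reachable_inl_of_reachable hinl hinr he hreach).trans hve'.reachable⟩
  exact ⟨w, c, hc, hcT, c.snd_mem_support_of_mem_edges hce⟩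

end IsEdgeSubdivision

end SimpleGraph

theorem subsetFVS_edge_iff_vertex_general {V : Type} [Fintype V]
    (G : SimpleGraph V) (S' : Set (Sym2 V)) (hS'E : S' ⊆ G.edgeSet) (k : ℕ)
    (G' : SimpleGraph (V ⊕ {e : Sym2 V // e ∈ S'}))
    (hAdj₁ : ∀ u w : V, G'.Adj (Sum.inl u) (Sum.inl w) ↔ (G.Adj u w ∧ s(u, w) ∉ S'))
    (hAdj₂ : ∀ (u : V) (e : {e : Sym2 V // e ∈ S'}),
      G'.Adj (Sum.inl u) (Sum.inr e) ↔ u ∈ e.val)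
    (hAdj₃ : ∀ e f : {e : Sym2 V // e ∈ S'}, ¬ G'.Adj (Sum.inr e) (Sum.inr f)) :
    (∃ T : Set V, T.ncard ≤ k ∧
        ∀ (v : V) (c : G.Walk v v), c.IsCycle → (∀ x ∈ c.support, x ∉ T) →
          ∀ e ∈ c.edges, e ∉ S') ↔
    (∃ T' : Set (V ⊕ {e : Sym2 V // e ∈ S'}), T'.ncard ≤ k ∧
        ∀ (v : V ⊕ {e : Sym2 V // e ∈ S'}) (c : G'.Walk v v), c.IsCycle →
          (∀ x ∈ c.support, x ∉ T') →
          ∀ x ∈ c.support, x ∉ Set.range (Sum.inr : {e : Sym2 V // e ∈ S'} → V ⊕ {e : Sym2 V // e ∈ S'})) := by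
  have hG : G.IsEdgeSubdivision S' G' := ⟨hS'E, hAdj₁, hAdj₂, hAdj₃⟩
  constructor
  · rintro ⟨T, hTk, hT⟩
    refine ⟨Sum.inl '' T, by rwa [Set.ncard_image_of_injective _ Sum.inl_injective], ?_⟩
    rintro v c hc hcT x hx ⟨e, rfl⟩
    obtain ⟨w, c', hc', hc'T, he⟩ :=
        hG.exists_isCycle_mem_edges_of_mem_support (fun a ha => Set.mem_image_of_mem _ ha)
        ⟨v, c, hc, hcT, hx⟩
    exact hT w c' hc' hc'T e.val he e.2
  · rintro ⟨T', hTk', hT'⟩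
    set T := Sum.elim id (fun f => f.val.out.1) '' T'
    refine ⟨T, (Set.ncard_image_le T'.toFinite).trans hTk', ?_⟩
    intro v c hc hcT e he heS
    obtain ⟨w, c', hc', hc'T, hec⟩ := hG.exists_isCycle_mem_support_of_mem_edges
      (T := T) (T' := T') (e := ⟨e, heS⟩) (fun a ha haT => ha ⟨Sum.inl a, haT, rfl⟩)
      (fun f hf hfT => hf _ (Sym2.out_fst_mem _) ⟨Sum.inr f, hfT, rfl⟩) ⟨v, c, hc, hcT, he⟩
    exact hT' w c' hc' hc'T _ hec ⟨_, rfl⟩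

/-- Subdividing every edge of `S'` once and marking the new vertices
as `S` turns the edge-version of Subset-FVS into the vertex-version: there is
a set `T ⊆ V`, `|T| ≤ k`, such that no simple cycle of `G[V ∖ T]` contains an edge of
`S'`, iff there is a set `T'` of vertices of the subdivided graph `G'`, `|T'| ≤ k`,
such that no simple cycle of `G'[V(G') ∖ T']` contains one of the new vertices. -/
theorem subsetFVS_edge_iff_vertex {V : Type} [Fintype V] [DecidableEq V]
    (G : SimpleGraph V) (S' : Set (Sym2 V)) (hS'E : S' ⊆ G.edgeSet) (k : ℕ)
    (G' : SimpleGraph (V ⊕ {e : Sym2 V // e ∈ S'}))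
    (hAdj₁ : ∀ u w : V, G'.Adj (Sum.inl u) (Sum.inl w) ↔ (G.Adj u w ∧ s(u, w) ∉ S'))
    (hAdj₂ : ∀ (u : V) (e : {e : Sym2 V // e ∈ S'}),
      G'.Adj (Sum.inl u) (Sum.inr e) ↔ u ∈ e.val)
    (hAdj₃ : ∀ e f : {e : Sym2 V // e ∈ S'}, ¬ G'.Adj (Sum.inr e) (Sum.inr f)) :
    (∃ T : Set V, T.ncard ≤ k ∧
        ∀ (v : V) (c : G.Walk v v), c.IsCycle → (∀ x ∈ c.support, x ∉ T) →
          ∀ e ∈ c.edges, e ∉ S') ↔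
    (∃ T' : Set (V ⊕ {e : Sym2 V // e ∈ S'}), T'.ncard ≤ k ∧
        ∀ (v : V ⊕ {e : Sym2 V // e ∈ S'}) (c : G'.Walk v v), c.IsCycle →
          (∀ x ∈ c.support, x ∉ T') →
          ∀ x ∈ c.support, x ∉ Set.range (Sum.inr : {e : Sym2 V // e ∈ S'} → V ⊕ {e : Sym2 V // e ∈ S'})) :=
  subsetFVS_edge_iff_vertex_general G S' hS'E k G' hAdj₁ hAdj₂ hAdj₃
end

section
/- (2-Expansion Lemma) Let H be a finite simple bipartite graph with bipartition (X, Y), i.e., every edge of H joins a vertex of X to a vertex of Y. Suppose Y is nonempty, |Y| ≥ 2|X|, and every vertex of Y has at least one neighbour in X. Then there exist nonempty subsets X' ⊆ X and Y' ⊆ Y such that: (i) the set of vertices of X having a neighbour in Y' is exactly X'; and (ii) there exist functions y₁, y₂ : X' → Y' such that for every x ∈ X', y₁(x) and y₂(x) are two distinct neighbours of x, and the values y₁(x), y₂(x) over all x ∈ X' are pairwise distinct (each vertex of Y' is assigned to at most one x ∈ X'). -/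
open Classical in
private lemma two_expansion_aux {V : Type} [Fintype V] [DecidableEq V]
    (H : SimpleGraph V) (n : ℕ) :
    ∀ (X Y : Finset V), X.card ≤ n → Y.Nonempty → 2 * X.card ≤ Y.card →
    (∀ y ∈ Y, ∃ x ∈ X, H.Adj y x) →
    ∃ (X' Y' : Finset V), X' ⊆ X ∧ Y' ⊆ Y ∧ X'.Nonempty ∧ Y'.Nonempty ∧
      (∀ x ∈ X, (x ∈ X' ↔ ∃ y ∈ Y', H.Adj x y)) ∧
      ∃ y₁ y₂ : V → V,
        (∀ x ∈ X', y₁ x ∈ Y' ∧ y₂ x ∈ Y' ∧ H.Adj x (y₁ x) ∧ H.Adj x (y₂ x) ∧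
          y₁ x ≠ y₂ x) ∧
        (∀ x ∈ X', ∀ x' ∈ X', x ≠ x' →
          y₁ x ≠ y₁ x' ∧ y₁ x ≠ y₂ x' ∧ y₂ x ≠ y₁ x' ∧ y₂ x ≠ y₂ x') := by
  induction n using Nat.strong_induction_on with
  | _ n IH =>
  intro X Y hn hYne hcard hYnbr
  classical
  -- neighbourhood in `Y`
  set nbr : V → Finset V := fun x => Y.filter (fun y => H.Adj x y) with hnbr
  have hnbr_mem : ∀ x y, y ∈ nbr x ↔ y ∈ Y ∧ H.Adj x y := by
    intro x y; simp [hnbr]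
  by_cases hhall : ∀ S : Finset V, S ⊆ X → 2 * S.card ≤ (S.biUnion nbr).card
  · -- Hall's condition holds: take X' = X, Y' = Y and use Hall's theorem
    have hXne : X.Nonempty := by
      obtain ⟨y, hy⟩ := hYne
      obtain ⟨x, hx, _⟩ := hYnbr y hy
      exact ⟨x, hx⟩
    -- doubled index type
    have hall : ∀ s : Finset (↥X × Fin 2), s.card ≤ (s.biUnion (fun p => nbr p.1.1)).card := by
      intro s
      set S : Finset V := s.image (fun p => (p.1 : V)) with hS
      have hSX : S ⊆ X := by
        intro x hx
        simp only [hS, Finset.mem_image] at hx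
        obtain ⟨p, _, rfl⟩ := hx
        exact p.1.2
      have hbu : s.biUnion (fun p => nbr p.1.1) = S.biUnion nbr := by
        ext y
        simp only [Finset.mem_biUnion, hS, Finset.mem_image]
        constructor
        · rintro ⟨p, hp, hy⟩; exact ⟨(p.1 : V), ⟨p, hp, rfl⟩, hy⟩
        · rintro ⟨x, ⟨p, hp, rfl⟩, hy⟩; exact ⟨p, hp, hy⟩
      have hcard2 : s.card ≤ 2 * S.card := by
        have hinj : Set.InjOn (fun p : ↥X × Fin 2 => ((p.1 : V), p.2)) s := by
          intro p _ q _ h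
          simp only [Prod.mk.injEq] at h
          exact Prod.ext (Subtype.ext h.1) h.2
        have h1 : s.card = (s.image (fun p : ↥X × Fin 2 => ((p.1 : V), p.2))).card :=
          (Finset.card_image_of_injOn hinj).symm
        have h2 : (s.image (fun p : ↥X × Fin 2 => ((p.1 : V), p.2))) ⊆
            S ×ˢ (Finset.univ : Finset (Fin 2)) := by
          intro q hq
          simp only [Finset.mem_image] at hq
          obtain ⟨p, hp, rfl⟩ := hq
          refine Finset.mem_product.mpr ⟨?_, Finset.mem_univ _⟩
          exact Finset.mem_image.mpr ⟨p, hp, rfl⟩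
        have h3 := Finset.card_le_card h2
        rw [Finset.card_product] at h3
        simp only [Finset.card_univ, Fintype.card_fin] at h3
        omega
      calc s.card ≤ 2 * S.card := hcard2
        _ ≤ (S.biUnion nbr).card := hhall S hSX
        _ = (s.biUnion (fun p => nbr p.1.1)).card := by rw [hbu]
    obtain ⟨f, hfinj, hf⟩ :=
      (Finset.all_card_le_biUnion_card_iff_exists_injective (fun p : ↥X × Fin 2 => nbr p.1.1)).mp
        hall
    refine ⟨X, Y, subset_rfl, subset_rfl, hXne, hYne, ?_, ?_⟩
    · -- the iff; we need the functions first, so state them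
      intro x hx
      refine ⟨fun _ => ?_, fun _ => hx⟩
      have := hf (⟨x, hx⟩, 0)
      rw [hnbr_mem] at this
      exact ⟨f (⟨x, hx⟩, 0), this.1, this.2⟩
    · refine ⟨fun x => if h : x ∈ X then f (⟨x, h⟩, 0) else x,
        fun x => if h : x ∈ X then f (⟨x, h⟩, 1) else x, ?_, ?_⟩
      · intro x hx
        simp only [dif_pos hx]
        have h0 := hf (⟨x, hx⟩, 0); rw [hnbr_mem] at h0
        have h1 := hf (⟨x, hx⟩, 1); rw [hnbr_mem] at h1
        refine ⟨h0.1, h1.1, h0.2, h1.2, fun h => ?_⟩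
        have := hfinj h
        simp at this
      · intro x hx x' hx' hne
        simp only [dif_pos hx, dif_pos hx']
        have hsub : (⟨x, hx⟩ : ↥X) ≠ ⟨x', hx'⟩ := fun h => hne (congrArg Subtype.val h)
        refine ⟨?_, ?_, ?_, ?_⟩ <;>
        · intro h
          have := hfinj h
          rw [Prod.mk.injEq] at this
          exact hsub this.1
  · -- Hall fails for some S ⊆ X; remove S and N(S), recurse
    push_neg at hhall
    obtain ⟨S, hSX, hSlt⟩ := hhall
    set NS : Finset V := S.biUnion nbr with hNS
    have hSne : S.Nonempty := by
      rcases S.eq_empty_or_nonempty with rfl | h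
      · simp at hSlt
      · exact h
    have hNSY : NS ⊆ Y := by
      intro y hy
      simp only [hNS, Finset.mem_biUnion] at hy
      obtain ⟨x, _, hy⟩ := hy
      exact ((hnbr_mem x y).mp hy).1
    set X₂ : Finset V := X \ S with hX₂
    set Y₂ : Finset V := Y \ NS with hY₂
    have hX₂card : X₂.card = X.card - S.card := Finset.card_sdiff_of_subset hSX
    have hY₂card : Y₂.card = Y.card - NS.card := Finset.card_sdiff_of_subset hNSY
    have hScard : S.card ≤ X.card := Finset.card_le_card hSX
    have hNScard : NS.card ≤ Y.card := Finset.card_le_card hNSY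
    have hSpos : 0 < S.card := Finset.card_pos.mpr hSne
    have hcard2 : 2 * X₂.card ≤ Y₂.card := by omega
    have hY₂pos : 0 < Y₂.card := by omega
    have hY₂ne : Y₂.Nonempty := Finset.card_pos.mp hY₂pos
    have hX₂lt : X₂.card < n := by omega
    -- not a neighbour of S property
    have hnotS : ∀ y ∈ Y₂, ∀ x ∈ S, ¬ H.Adj x y := by
      intro y hy x hx hadj
      have : y ∈ NS := by
        simp only [hNS, Finset.mem_biUnion]
        exact ⟨x, hx, (hnbr_mem x y).mpr ⟨(Finset.mem_sdiff.mp hy).1, hadj⟩⟩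
      exact (Finset.mem_sdiff.mp hy).2 this
    have hYnbr₂ : ∀ y ∈ Y₂, ∃ x ∈ X₂, H.Adj y x := by
      intro y hy
      obtain ⟨x, hx, hadj⟩ := hYnbr y (Finset.mem_sdiff.mp hy).1
      refine ⟨x, ?_, hadj⟩
      rw [hX₂, Finset.mem_sdiff]
      refine ⟨hx, fun hxS => hnotS y hy x hxS hadj.symm⟩
    obtain ⟨X', Y', hX'sub, hY'sub, hX'ne, hY'ne, hiff, y₁, y₂, h1, h2⟩ :=
      IH X₂.card hX₂lt X₂ Y₂ le_rfl hY₂ne hcard2 hYnbr₂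
    refine ⟨X', Y', hX'sub.trans (Finset.sdiff_subset), hY'sub.trans (Finset.sdiff_subset),
      hX'ne, hY'ne, ?_, y₁, y₂, h1, h2⟩
    intro x hx
    by_cases hxS : x ∈ S
    · constructor
      · intro hxX'
        exact absurd (hX'sub hxX') (by simp [hX₂, hxS])
      · rintro ⟨y, hyY', hadj⟩
        exact absurd hadj (hnotS y (hY'sub hyY') x hxS)
    · exact hiff x (Finset.mem_sdiff.mpr ⟨hx, hxS⟩)

/-- **2-Expansion Lemma.** Let `H` be a finite simple bipartite graph
with bipartition `(X, Y)`, with `Y` nonempty, `|Y| ≥ 2|X|`, and every vertex of `Y`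
having a neighbour in `X`. Then there are nonempty `X' ⊆ X`, `Y' ⊆ Y` such that the
set of vertices of `X` with a neighbour in `Y'` is exactly `X'`, and each `x ∈ X'`
has two private neighbours in `Y'`. -/
theorem two_expansion_lemma {V : Type} [Fintype V] [DecidableEq V]
    (H : SimpleGraph V) (X Y : Finset V)
    (hdisj : Disjoint X Y) (hcover : X ∪ Y = Finset.univ)
    (hbip : ∀ u w : V, H.Adj u w → (u ∈ X ∧ w ∈ Y) ∨ (u ∈ Y ∧ w ∈ X))
    (hYne : Y.Nonempty) (hcard : 2 * X.card ≤ Y.card)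
    (hYnbr : ∀ y ∈ Y, ∃ x ∈ X, H.Adj y x) :
    ∃ (X' Y' : Finset V), X' ⊆ X ∧ Y' ⊆ Y ∧ X'.Nonempty ∧ Y'.Nonempty ∧
      (∀ x ∈ X, (x ∈ X' ↔ ∃ y ∈ Y', H.Adj x y)) ∧
      ∃ y₁ y₂ : V → V,
        (∀ x ∈ X', y₁ x ∈ Y' ∧ y₂ x ∈ Y' ∧ H.Adj x (y₁ x) ∧ H.Adj x (y₂ x) ∧
          y₁ x ≠ y₂ x) ∧
        (∀ x ∈ X', ∀ x' ∈ X', x ≠ x' →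
          y₁ x ≠ y₁ x' ∧ y₁ x ≠ y₂ x' ∧ y₂ x ≠ y₁ x' ∧ y₂ x ≠ y₂ x') :=
  two_expansion_aux H X.card X Y le_rfl hYne hcard hYnbr
end

section
/- In every finite forest, the number of vertices of degree exactly 2 none of whose neighbours has degree exactly 2 is at most the number of vertices of degree exactly 1 plus the number of vertices of degree at least 3. -/
open Finset SimpleGraph

section Aux
variable {V : Type} [Fintype V] [DecidableEq V]

lemma my_exists_leaf (G : SimpleGraph V) [DecidableRel G.Adj] (hF : G.IsAcyclic)
    {a b : V} (hab : G.Adj a b) : ∃ v, G.degree v = 1 := by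
  classical
  have hsab : (Walk.cons hab Walk.nil : G.Walk a b).IsPath := by
    simp [Walk.cons_isPath_iff, hab.ne]
  obtain ⟨⟨u, v, p⟩, -, hmax⟩ := Finset.exists_max_image
    (Finset.univ : Finset (Σ u v : V, G.Path u v)) (fun q => q.2.2.1.length)
    ⟨⟨a, b, ⟨Walk.cons hab Walk.nil, hsab⟩⟩, Finset.mem_univ _⟩
  have hL : 1 ≤ p.1.length := by
    have := hmax ⟨a, b, ⟨Walk.cons hab Walk.nil, hsab⟩⟩ (Finset.mem_univ _)
    simpa using this
  refine ⟨v, ?_⟩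
  have hgv : ∀ c, G.Adj v c → c = p.1.getVert (p.1.length - 1) := by
    intro c hvc
    -- c must be in the support of p
    have hcs : c ∈ p.1.support := by
      by_contra hcn
      have hq : (Walk.cons hvc.symm p.1.reverse).IsPath := by
        rw [Walk.cons_isPath_iff]
        exact ⟨p.2.reverse, by simpa [Walk.support_reverse] using hcn⟩
      have := hmax ⟨c, u, ⟨Walk.cons hvc.symm p.1.reverse, hq⟩⟩ (Finset.mem_univ _)
      simp only [Walk.length_cons, Walk.length_reverse] at this
      omega
    -- the path from c to v inside p must be the single edge
    have hdrop : p.1.dropUntil c hcs = Walk.cons hvc.symm Walk.nil := by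
      have h1 : (⟨p.1.dropUntil c hcs, p.2.dropUntil hcs⟩ : G.Path c v) =
          ⟨Walk.cons hvc.symm Walk.nil, by simp [Walk.cons_isPath_iff, hvc.ne']⟩ :=
        hF.path_unique _ _
      exact congrArg Subtype.val h1
    have hlen : (p.1.takeUntil c hcs).length + 1 = p.1.length := by
      have := congrArg Walk.length (p.1.take_spec hcs)
      rwa [Walk.length_append, hdrop, Walk.length_cons, Walk.length_nil] at this
    have := Walk.getVert_append (p.1.takeUntil c hcs) (p.1.dropUntil c hcs) (p.1.length - 1)
    rw [Walk.take_spec] at this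
    rw [this]
    have h2 : ¬ (p.1.length - 1 < (p.1.takeUntil c hcs).length) := by omega
    rw [if_neg h2]
    have h3 : p.1.length - 1 - (p.1.takeUntil c hcs).length = 0 := by omega
    rw [h3, Walk.getVert_zero]
  have hadj : G.Adj v (p.1.getVert (p.1.length - 1)) := by
    have := p.1.adj_getVert_succ (i := p.1.length - 1) (by omega)
    have h4 : p.1.length - 1 + 1 = p.1.length := by omega
    rw [h4, Walk.getVert_length] at this
    exact this.symm
  have : G.neighborFinset v = {p.1.getVert (p.1.length - 1)} := by
    ext c
    simp only [mem_neighborFinset, Finset.mem_singleton]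
    exact ⟨hgv c, fun h => h ▸ hadj⟩
  rw [← card_neighborFinset_eq_degree, this, Finset.card_singleton]

lemma my_card_edge_le (n : ℕ) : ∀ (G : SimpleGraph V) [DecidableRel G.Adj],
    G.IsAcyclic → G.edgeFinset.card = n →
    G.edgeFinset.card ≤ (univ.filter fun v => 0 < G.degree v).card := by
  induction n with
  | zero => intro G _ _ hE; simp [hE]
  | succ n ih =>
    intro G _ hF hE
    have hne : G.edgeFinset.Nonempty := Finset.card_pos.mp (by omega)
    obtain ⟨e, he⟩ := hne
    induction e using Sym2.ind with
    | _ a b =>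
    rw [mem_edgeFinset, mem_edgeSet] at he
    obtain ⟨v, hv⟩ := my_exists_leaf G hF he
    have hw1 : (G.neighborFinset v).card = 1 := by
      rw [card_neighborFinset_eq_degree]; exact hv
    obtain ⟨w, hw⟩ := Finset.card_eq_one.mp hw1
    have hvw : G.Adj v w := by
      rw [← mem_neighborFinset, hw]; exact Finset.mem_singleton_self w
    set G' := G.deleteEdges {s(v, w)} with hG'
    letI : DecidableRel G'.Adj := fun x y =>
      decidable_of_iff (G.Adj x y ∧ ¬ s(x, y) = s(v, w)) (by simp [hG'])
    have hle : G' ≤ G := G.deleteEdges_le _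
    have hF' : G'.IsAcyclic := fun w c hc => hF (c.mapLe hle) (hc.mapLe hle)
    -- edge count of G'
    have hEs : G'.edgeFinset = G.edgeFinset \ {s(v, w)} := by
      ext e
      simp only [mem_edgeFinset, hG', edgeSet_deleteEdges, Set.mem_diff,
        Set.mem_singleton_iff, Finset.mem_sdiff, Finset.mem_singleton]
    have hmemE : s(v, w) ∈ G.edgeFinset := by rwa [mem_edgeFinset, mem_edgeSet]
    have hE' : G'.edgeFinset.card = n := by
      rw [hEs, Finset.card_sdiff_of_subset (by simpa using hmemE)]
      simp [hE]
    -- v is isolated in G'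
    have hviso : ∀ x, ¬ G'.Adj v x := by
      intro x hx
      rw [hG', deleteEdges_adj] at hx
      obtain ⟨hx1, hx2⟩ := hx
      apply hx2
      have hxm : x ∈ G.neighborFinset v := by rwa [mem_neighborFinset]
      rw [hw, Finset.mem_singleton] at hxm
      rw [hxm]
      simp
    have hsub : (univ.filter fun x => 0 < G'.degree x) ⊆
        (univ.filter fun x => 0 < G.degree x).erase v := by
      intro x hx
      rw [Finset.mem_filter] at hx
      obtain ⟨y, hy⟩ := (G'.degree_pos_iff_exists_adj x).mp hx.2
      rw [Finset.mem_erase, Finset.mem_filter]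
      refine ⟨?_, Finset.mem_univ _, ?_⟩
      · rintro rfl; exact hviso y hy
      · exact (G.degree_pos_iff_exists_adj x).mpr ⟨y, hle hy⟩
    have hvN : v ∈ (univ.filter fun x => 0 < G.degree x) := by
      rw [Finset.mem_filter]; exact ⟨Finset.mem_univ _, by omega⟩
    have := ih G' hF' hE'
    have hcard : ((univ.filter fun x => 0 < G.degree x).erase v).card + 1 =
        (univ.filter fun x => 0 < G.degree x).card := Finset.card_erase_add_one hvN
    have := Finset.card_le_card hsub
    omega

end Aux

/-- In every finite forest, the number of vertices of degree exactly
2 none of whose neighbours has degree exactly 2 is at most the number of vertices of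
degree exactly 1 plus the number of vertices of degree at least 3. -/
theorem forest_isolated_deg_two_bound {V : Type} [Fintype V] [DecidableEq V]
    (F : SimpleGraph V) [DecidableRel F.Adj] (hF : F.IsAcyclic) :
    (Finset.univ.filter
        (fun v => F.degree v = 2 ∧ ∀ u : V, F.Adj v u → F.degree u ≠ 2)).card ≤
      (Finset.univ.filter (fun v => F.degree v = 1)).card +
        (Finset.univ.filter (fun v => 3 ≤ F.degree v)).card := by
  classical
  set A := Finset.univ.filter
    (fun v => F.degree v = 2 ∧ ∀ u : V, F.Adj v u → F.degree u ≠ 2) with hA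
  set D1 := Finset.univ.filter (fun v => F.degree v = 1) with hD1
  set D3 := Finset.univ.filter (fun v => 3 ≤ F.degree v) with hD3
  set B := Finset.univ.filter (fun v : V => F.degree v = 1 ∨ 3 ≤ F.degree v) with hB
  -- Step 1: 2 * A.card ≤ ∑ u in B, F.degree u
  have step1 : 2 * A.card ≤ ∑ u ∈ B, F.degree u := by
    have h1 : 2 * A.card = ∑ v ∈ A, F.degree v := by
      have : ∑ v ∈ A, F.degree v = ∑ _v ∈ A, 2 :=
        Finset.sum_congr rfl (fun v hv => by
          rw [hA, Finset.mem_filter] at hv; exact hv.2.1)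
      rw [this, Finset.sum_const, smul_eq_mul, mul_comm]
    have h2 : ∀ v ∈ A, F.degree v = ∑ u ∈ B, (if F.Adj v u then 1 else 0) := by
      intro v hv
      rw [hA, Finset.mem_filter] at hv
      have : F.degree v = ∑ u ∈ Finset.univ, (if F.Adj v u then 1 else 0) := by
        rw [← F.card_neighborFinset_eq_degree, neighborFinset_eq_filter, Finset.card_filter]
      rw [this]
      refine (Finset.sum_subset (Finset.subset_univ _) ?_).symm
      intro u _ hu
      rw [hB, Finset.mem_filter] at hu
      push_neg at hu
      have hu' := hu (Finset.mem_univ _)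
      by_cases hadj : F.Adj v u
      · exfalso
        have hd1 : 0 < F.degree u := (F.degree_pos_iff_exists_adj u).mpr ⟨v, hadj.symm⟩
        have hd2 : F.degree u ≠ 2 := hv.2.2 u hadj
        omega
      · simp [hadj]
    have h3 : ∑ v ∈ A, F.degree v = ∑ u ∈ B, ∑ v ∈ A, (if F.Adj u v then 1 else 0) := by
      rw [Finset.sum_congr rfl h2, Finset.sum_comm]
      refine Finset.sum_congr rfl fun u _ => Finset.sum_congr rfl fun v _ => ?_
      simp [adj_comm]
    have h4 : ∀ u ∈ B, (∑ v ∈ A, (if F.Adj u v then 1 else 0)) ≤ F.degree u := by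
      intro u _
      have : F.degree u = ∑ v ∈ Finset.univ, (if F.Adj u v then 1 else 0) := by
        rw [← F.card_neighborFinset_eq_degree, neighborFinset_eq_filter, Finset.card_filter]
      rw [this]
      exact Finset.sum_le_sum_of_subset (Finset.subset_univ _)
    calc 2 * A.card = ∑ v ∈ A, F.degree v := h1
      _ = ∑ u ∈ B, ∑ v ∈ A, (if F.Adj u v then 1 else 0) := h3
      _ ≤ ∑ u ∈ B, F.degree u := Finset.sum_le_sum h4
  -- Step 2: ∑ u in B, F.degree u ≤ 2 * D1.card + 2 * D3.card
  have hEdges : F.edgeFinset.card ≤ (univ.filter fun v => 0 < F.degree v).card :=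
    my_card_edge_le _ F hF rfl
  have hHand : ∑ v, F.degree v = 2 * F.edgeFinset.card := F.sum_degrees_eq_twice_card_edges
  have hBsum : ∑ u ∈ B, F.degree u =
      ∑ u, (if F.degree u = 1 ∨ 3 ≤ F.degree u then F.degree u else 0) := by
    rw [hB, Finset.sum_filter]
  have hcard1 : D1.card = ∑ u, (if F.degree u = 1 then 1 else 0) := by
    rw [hD1, Finset.card_filter]
  have hcard3 : D3.card = ∑ u, (if 3 ≤ F.degree u then 1 else 0) := by
    rw [hD3, Finset.card_filter]
  have hcardN : (univ.filter fun v => 0 < F.degree v).card =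
      ∑ u, (if 0 < F.degree u then 1 else 0) := by
    rw [Finset.card_filter]
  have hpoint : ∑ u, ((if F.degree u = 1 ∨ 3 ≤ F.degree u then F.degree u else 0)
        + 2 * (if 0 < F.degree u then 1 else 0)) ≤
      ∑ u, (2 * (if F.degree u = 1 then 1 else 0) + 2 * (if 3 ≤ F.degree u then 1 else 0)
        + F.degree u) := by
    refine Finset.sum_le_sum fun u _ => ?_
    split_ifs <;> omega
  rw [Finset.sum_add_distrib] at hpoint
  rw [Finset.sum_add_distrib, Finset.sum_add_distrib] at hpoint
  rw [← Finset.mul_sum, ← Finset.mul_sum, ← Finset.mul_sum] at hpoint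
  rw [← hBsum, ← hcard1, ← hcard3, ← hcardN] at hpoint
  omega
end

section
/- Let G be a finite simple graph with vertex set V and edge set E, let S ⊆ E, let k be a natural number, and let v, v' be two distinct vertices of G. Suppose P₁, …, P_{k+2} are pairwise distinct simple paths from v to v' such that any two of them share no vertex other than v and v', and each P_i contains at least one edge of S. Then every set T ⊆ V with |T| ≤ k such that the subgraph of G induced on V ∖ T contains no S-cycle must contain v or v'. -/
/-! If neither endpoint lies in `T`, the paths meet `T` in pairwise disjoint sets, so at most
`|T| ≤ k` of the `k + 2` paths meet `T`. Two paths avoiding `T` concatenate to a cycle of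
`G[V ∖ T]`, and it contains the `S`-edge of either path. -/

open SimpleGraph Finset

namespace SimpleGraph.Walk

variable {V : Type*} {G : SimpleGraph V} {u v : V}

lemma IsPath.ne_start_of_mem_support_tail {p : G.Walk u v} (hp : p.IsPath) {x : V}
    (hx : x ∈ p.support.tail) : x ≠ u := by
  have hnodup := hp.support_nodup
  rw [← cons_tail_support, List.nodup_cons] at hnodup
  rintro rfl
  exact hnodup.1 hx

lemma IsPath.isCycle_append_reverse {p q : G.Walk u v} (hp : p.IsPath) (hq : q.IsPath)
    (hne : p ≠ q) (hdisj : ∀ x ∈ p.support, x ∈ q.support → x = u ∨ x = v) :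
    (p.append q.reverse).IsCycle := by
  refine hp.isCycle_append hq.reverse (List.disjoint_left.mpr fun x hxp hxq ↦ ?_) ?_
  · have hxq' : x ∈ q.support := by
      simpa only [support_reverse, List.mem_reverse] using List.mem_of_mem_tail hxq
    rcases hdisj x (List.mem_of_mem_tail hxp) hxq' with rfl | rfl
    · exact hp.ne_start_of_mem_support_tail hxp rfl
    · exact hq.reverse.ne_start_of_mem_support_tail hxq rfl
  · -- two distinct paths cannot both be a single edge `s(u, v)`
    by_contra! hshort
    rw [length_reverse] at hshort
    exact hne (eq_of_length_le_one hshort.1 hshort.2)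

end SimpleGraph.Walk

lemma card_filter_inter_nonempty_le_ncard {ι α : Type*} (s : Finset ι) (f : ι → Set α)
    {T : Set α} (hT : T.Finite) (hf : (s : Set ι).Pairwise fun i j ↦ Disjoint (f i ∩ T) (f j))
    [DecidablePred fun i ↦ (f i ∩ T).Nonempty] :
    #{i ∈ s | (f i ∩ T).Nonempty} ≤ T.ncard := by
  rw [Set.ncard_eq_toFinset_card T hT]
  refine card_le_card_of_forall_subsingleton (fun i x ↦ x ∈ f i) (fun i hi ↦ ?_) ?_
  · obtain ⟨x, hxi, hxT⟩ := (mem_filter.mp hi).2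
    exact ⟨x, hT.mem_toFinset.mpr hxT, hxi⟩
  · rintro x hxT i ⟨hi, hxi⟩ j ⟨hj, hxj⟩
    by_contra hij
    exact Set.disjoint_left.mp (hf (mem_filter.mp hi).1 (mem_filter.mp hj).1 hij)
      ⟨hxi, hT.mem_toFinset.mp hxT⟩ hxj

lemma exists_ne_disjoint_of_ncard_add_two_le {ι α : Type*} [Fintype ι] (f : ι → Set α)
    {T : Set α} (hT : T.Finite) (hcard : T.ncard + 2 ≤ Fintype.card ι)
    (hf : Pairwise fun i j ↦ Disjoint (f i ∩ T) (f j)) :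
    ∃ i j, i ≠ j ∧ Disjoint (f i) T ∧ Disjoint (f j) T := by
  classical
  have hmeet := card_filter_inter_nonempty_le_ncard univ f hT fun i _ j _ hij ↦ hf hij
  have hmiss : 1 < #{i | ¬(f i ∩ T).Nonempty} := by
    have := card_filter_add_card_filter_not (s := univ) fun i ↦ (f i ∩ T).Nonempty
    rw [card_univ] at this
    omega
  obtain ⟨i, hi, j, hj, hij⟩ := one_lt_card.mp hmiss
  simp only [mem_filter, mem_univ, true_and, Set.not_nonempty_iff_eq_empty] at hi hj
  exact ⟨i, j, hij, Set.disjoint_iff_inter_eq_empty.mpr hi, Set.disjoint_iff_inter_eq_empty.mpr hj⟩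

theorem paths_force_endpoint_in_solution_general {V : Type} [Fintype V]
    (G : SimpleGraph V) (S : Set (Sym2 V)) (k : ℕ)
    (v v' : V)
    (p : Fin (k + 2) → G.Walk v v')
    (hpath : ∀ i, (p i).IsPath)
    (hdist : ∀ i j, i ≠ j → p i ≠ p j)
    (hintdisj : ∀ i j, i ≠ j →
      ∀ x, x ∈ (p i).support → x ∈ (p j).support → x = v ∨ x = v')
    (hSedge : ∀ i, ∃ e ∈ (p i).edges, e ∈ S)
    (T : Set V) (hT : T.ncard ≤ k)
    (hhit : ∀ (u : V) (c : G.Walk u u), c.IsCycle → (∀ x ∈ c.support, x ∉ T) →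
      ∀ e ∈ c.edges, e ∉ S) :
    v ∈ T ∨ v' ∈ T := by
  by_contra! ⟨hv, hv'⟩
  have hdisjT :
      Pairwise fun i j ↦ Disjoint ({x | x ∈ (p i).support} ∩ T) {x | x ∈ (p j).support} :=
    fun i j hij ↦ Set.disjoint_left.mpr fun x ⟨hxi, hxT⟩ hxj ↦ by
      rcases hintdisj i j hij x hxi hxj with rfl | rfl <;> contradiction
  obtain ⟨i, j, hij, hi, hj⟩ := exists_ne_disjoint_of_ncard_add_two_le _ T.toFinite
    (by simpa using hT) hdisjT
  have hcycle := (hpath i).isCycle_append_reverse (hpath j) (hdist i j hij) (hintdisj i j hij)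
  obtain ⟨e, he, heS⟩ := hSedge i
  refine hhit v _ hcycle (fun x hx hxT ↦ ?_) e (by simp [Walk.edges_append, he]) heS
  rw [Walk.mem_support_append_iff, Walk.support_reverse, List.mem_reverse] at hx
  exact hx.elim (Set.disjoint_left.mp hi · hxT) (Set.disjoint_left.mp hj · hxT)

/-- If `P₁, …, P_{k+2}` are pairwise distinct simple `v`–`v'` paths,
pairwise sharing no vertex other than `v` and `v'`, each containing an edge of `S`,
then every `T ⊆ V` with `|T| ≤ k` hitting all `S`-cycles (no simple cycle of
`G[V ∖ T]` contains an edge of `S`) must contain `v` or `v'`. -/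
theorem paths_force_endpoint_in_solution {V : Type} [Fintype V]
    (G : SimpleGraph V) (S : Set (Sym2 V)) (hS : S ⊆ G.edgeSet) (k : ℕ)
    (v v' : V) (hvv' : v ≠ v')
    (p : Fin (k + 2) → G.Walk v v')
    (hpath : ∀ i, (p i).IsPath)
    (hdist : ∀ i j, i ≠ j → p i ≠ p j)
    (hintdisj : ∀ i j, i ≠ j →
      ∀ x, x ∈ (p i).support → x ∈ (p j).support → x = v ∨ x = v')
    (hSedge : ∀ i, ∃ e ∈ (p i).edges, e ∈ S)
    (T : Set V) (hT : T.ncard ≤ k)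
    (hhit : ∀ (u : V) (c : G.Walk u u), c.IsCycle → (∀ x ∈ c.support, x ∉ T) →
      ∀ e ∈ c.edges, e ∉ S) :
    v ∈ T ∨ v' ∈ T :=
  paths_force_endpoint_in_solution_general G S k v v' p hpath hdist hintdisj hSedge T hT hhit
end

section
/- Let G be a finite simple graph with vertex set V and edge set E, and let S ⊆ E. Let F ⊆ V be such that the induced subgraph G[F] is connected and no edge of S has both endpoints in F. Let v ∈ V ∖ F be a vertex with at least two neighbours in F such that at least one edge joining v to a vertex of F belongs to S. Then the induced subgraph G[F ∪ {v}] contains a simple cycle that passes through v and contains an edge of S. -/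
/-! Let `s(v, a) ∈ S` with `a ∈ F`, and let `b ≠ a` be another neighbour of `v` in `F`. Since
`G[F]` is connected there is a path from `a` to `b` inside `F`; it avoids `v ∉ F`, so closing it
up with the edges `b v` and `v a` gives a cycle through `v` containing `s(v, a)`. -/

namespace SimpleGraph

variable {V : Type*} {G : SimpleGraph V}

theorem Preconnected.exists_isPath_support_subset_of_induce {s : Set V}
    (hs : (G.induce s).Preconnected) {a b : V} (ha : a ∈ s) (hb : b ∈ s) :
    ∃ p : G.Walk a b, p.IsPath ∧ ∀ x ∈ p.support, x ∈ s := by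
  obtain ⟨q, hq⟩ := hs.exists_isPath ⟨a, ha⟩ ⟨b, hb⟩
  let ι := Embedding.induce (G := G) s
  refine ⟨q.map ι.toHom, hq.map ι.injective, fun x hx => ?_⟩
  obtain ⟨y, -, rfl⟩ := List.mem_map.mp (q.support_map ι.toHom ▸ hx)
  exact y.2

theorem Walk.IsPath.cons_concat_isCycle {u a b : V} {p : G.Walk a b} (hp : p.IsPath)
    (hu : u ∉ p.support) (hab : a ≠ b) (hua : G.Adj u a) (hbu : G.Adj b u) :
    (cons hua (p.concat hbu)).IsCycle := by
  refine (cons_isCycle_iff _ _).2 ⟨hp.concat hu hbu, ?_⟩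
  rw [edges_concat, List.concat_eq_append, List.mem_append, List.mem_singleton, Sym2.eq_iff]
  rintro (h | ⟨hub, hau⟩ | ⟨-, hab'⟩)
  · exact hu (p.fst_mem_support_of_mem_edges h)
  · exact hab (hau.trans hub)
  · exact hab hab'

end SimpleGraph

open SimpleGraph

theorem important_cycle_through_v_general {V : Type}
    (G : SimpleGraph V) (S : Set (Sym2 V))
    (F : Set V) (hconn : (G.induce F).Connected)
    (v : V) (hv : v ∉ F)
    (htwo : ∃ a ∈ F, ∃ b ∈ F, a ≠ b ∧ G.Adj v a ∧ G.Adj v b)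
    (hSv : ∃ a ∈ F, G.Adj v a ∧ s(v, a) ∈ S) :
    ∃ c : G.Walk v v, c.IsCycle ∧ (∀ x ∈ c.support, x ∈ F ∪ {v}) ∧
      ∃ e ∈ c.edges, e ∈ S := by
  obtain ⟨a, ha, hva, haS⟩ := hSv
  obtain ⟨b, hb, hab, hvb⟩ : ∃ b ∈ F, a ≠ b ∧ G.Adj v b := by
    obtain ⟨a', ha', b', hb', ha'b', hva', hvb'⟩ := htwo
    rcases eq_or_ne a a' with rfl | h
    · exact ⟨b', hb', ha'b', hvb'⟩
    · exact ⟨a', ha', h, hva'⟩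
  obtain ⟨p, hp, hpF⟩ := hconn.preconnected.exists_isPath_support_subset_of_induce ha hb
  refine ⟨.cons hva (p.concat hvb.symm),
    hp.cons_concat_isCycle (fun h => hv (hpF v h)) hab hva hvb.symm, fun x hx => ?_,
    s(v, a), by simp, haS⟩
  rw [Walk.support_cons, Walk.support_concat] at hx
  simp only [List.mem_cons, List.mem_append, List.not_mem_nil, or_false] at hx
  rcases hx with rfl | hx | rfl
  · exact Or.inr rfl
  · exact Or.inl (hpF x hx)
  · exact Or.inr rfl

/-- Let `F ⊆ V` induce a connected subgraph with no edge of `S`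
inside it, and let `v ∉ F` have at least two neighbours in `F`, at least one of the
edges from `v` to `F` being in `S`. Then `G[F ∪ {v}]` contains a simple cycle through
`v` containing an edge of `S`. -/
theorem important_cycle_through_v {V : Type} [Fintype V]
    (G : SimpleGraph V) (S : Set (Sym2 V)) (hS : S ⊆ G.edgeSet)
    (F : Set V) (hconn : (G.induce F).Connected)
    (hFS : ∀ x y : V, x ∈ F → y ∈ F → s(x, y) ∉ S)
    (v : V) (hv : v ∉ F)
    (htwo : ∃ a ∈ F, ∃ b ∈ F, a ≠ b ∧ G.Adj v a ∧ G.Adj v b)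
    (hSv : ∃ a ∈ F, G.Adj v a ∧ s(v, a) ∈ S) :
    ∃ c : G.Walk v v, c.IsCycle ∧ (∀ x ∈ c.support, x ∈ F ∪ {v}) ∧
      ∃ e ∈ c.edges, e ∈ S :=
  important_cycle_through_v_general G S F hconn v hv htwo hSv
end

section
/- Let G be a finite simple graph with vertex set V, let v₁, …, v_t be distinct vertices of G (the terminals), and let k be a natural number. Let G' be the graph obtained from G by adding t new vertices v₁', …, v_t' and the following new edges: v_i v_i' for every 1 ≤ i ≤ t, and v_i' v_j' for all 1 ≤ i < j ≤ t; let S = {v_i v_i' : 1 ≤ i ≤ t}. Then the following are equivalent: (a) there exists T ⊆ V with |T| ≤ k such that no connected component of the subgraph of G induced on V ∖ T contains two distinct terminals; (b) there exists T' ⊆ V(G') with |T'| ≤ k such that the subgraph of G' induced on V(G') ∖ T' contains no simple cycle containing an edge of S. -/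
/-!
An edge lies on a cycle iff deleting it keeps its endpoints connected; applied in `G' - T'`
to the edge `vᵢvᵢ'`, both directions become reachability statements. If `T` is a multiway
cut, then in `(G' - T) - vᵢvᵢ'` the vertex `vᵢ` only reaches copies of vertices of `G - T`
reachable from `vᵢ`, and none of them is adjacent to a primed terminal. Conversely, project
`T'` to `V` by `vⱼ' ↦ vⱼ`: a path from `vᵢ` to `vⱼ` avoiding the projection continues through
`vⱼ'` and `vᵢ'`, reconnecting `vᵢ` with `vᵢ'` without the edge `vᵢvᵢ'`.
-/

namespace SimpleGraph

variable {α : Type*} {G : SimpleGraph α} {X : Set α}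

variable (G X) in
/-- Unlike `G.induce Xᶜ`, this keeps the vertex type, so walks of `G` avoiding `X` transfer. -/
abbrev isolate : SimpleGraph α := ((⊤ : G.Subgraph).deleteVerts X).spanningCoe

@[simp]
theorem isolate_adj {x y : α} : (G.isolate X).Adj x y ↔ x ∉ X ∧ y ∉ X ∧ G.Adj x y := by
  simp

theorem isolate_le : G.isolate X ≤ G := fun _ _ h => (isolate_adj.1 h).2.2

theorem exists_isCycle_avoiding_mem_edges_iff {a b : α} :
    (∃ (u : α) (c : G.Walk u u), c.IsCycle ∧ (∀ x ∈ c.support, x ∉ X) ∧ s(a, b) ∈ c.edges) ↔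
      (G.isolate X).Adj a b ∧ ((G.isolate X).deleteEdges {s(a, b)}).Reachable a b := by
  rw [adj_and_reachable_delete_edges_iff_exists_cycle]
  constructor
  · rintro ⟨u, c, hc, hX, he⟩
    have hcX : ∀ e ∈ c.edges, e ∈ (G.isolate X).edgeSet := by
      rintro ⟨x, y⟩ hxy
      exact isolate_adj.2 ⟨hX x (c.fst_mem_support_of_mem_edges hxy),
        hX y (c.snd_mem_support_of_mem_edges hxy), c.adj_of_mem_edges hxy⟩
    exact ⟨u, c.transfer _ hcX, hc.transfer hcX, by rwa [Walk.edges_transfer]⟩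
  · rintro ⟨u, c, hc, he⟩
    refine ⟨u, c.mapLe isolate_le, hc.mapLe isolate_le, ?_, by rwa [Walk.edges_mapLe_eq_edges]⟩
    intro x hx
    rw [Walk.support_mapLe_eq_support,
      Walk.mem_support_iff_exists_mem_edges_of_not_nil hc.not_nil] at hx
    obtain ⟨⟨y, z⟩, hyz, hx⟩ := hx
    have hyzX := isolate_adj.1 (c.adj_of_mem_edges hyz)
    rcases Sym2.mem_iff.1 hx with rfl | rfl
    exacts [hyzX.1, hyzX.2.1]

def IsMultiwayCut {ι : Type*} (G : SimpleGraph α) (v : ι → α) (T : Set α) : Prop :=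
  ∀ i j, i ≠ j → ¬ ∃ p : G.Walk (v i) (v j), ∀ x ∈ p.support, x ∉ T

end SimpleGraph

open SimpleGraph

section Reduction

variable {V : Type} {t : ℕ} {G : SimpleGraph V} {v : Fin t → V} {G' : SimpleGraph (V ⊕ Fin t)}

theorem not_reachable_deleteEdges_of_isMultiwayCut
    (hAdj₁ : ∀ u w : V, G'.Adj (Sum.inl u) (Sum.inl w) ↔ G.Adj u w)
    (hAdj₂ : ∀ (u : V) (i : Fin t), G'.Adj (Sum.inl u) (Sum.inr i) ↔ u = v i)
    {T : Set V} (hT : G.IsMultiwayCut v T) {i : Fin t} (hvi : v i ∉ T) :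
    ¬ ((G'.isolate (Sum.inl '' T)).deleteEdges {s(Sum.inl (v i), Sum.inr i)}).Reachable
      (Sum.inl (v i)) (Sum.inr i) := by
  rintro ⟨p⟩
  -- the copies of the vertices reachable from `vᵢ` in `G - T`: no remaining edge leaves them
  let P : V ⊕ Fin t → Prop :=
    Sum.elim (fun u => ∃ q : G.Walk (v i) u, ∀ x ∈ q.support, x ∉ T) fun _ => False
  obtain ⟨⟨⟨x, y⟩, hxy⟩, -, hx, hy⟩ :=
    p.exists_boundary_dart {x | P x} ⟨Walk.nil, by simpa using hvi⟩ id
  simp only [deleteEdges_adj, isolate_adj, Set.mem_singleton_iff] at hxy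
  obtain ⟨⟨hxT, hyT, hxy⟩, hne⟩ := hxy
  rcases x with u | a
  · obtain ⟨q, hq⟩ := hx
    rcases y with w | b
    · refine hy ⟨q.concat ((hAdj₁ u w).1 hxy), fun x hx => ?_⟩
      rw [Walk.support_concat, List.mem_append, List.mem_singleton] at hx
      rcases hx with hx | rfl
      exacts [hq x hx, fun hw => hyT ⟨_, hw, rfl⟩]
    · obtain rfl := (hAdj₂ u b).1 hxy
      have hbi : i ≠ b := by rintro rfl; exact hne rfl
      exact hT i b hbi ⟨q, hq⟩
  · exact hx

theorem adj_and_reachable_deleteEdges_of_walk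
    (hAdj₁ : ∀ u w : V, G'.Adj (Sum.inl u) (Sum.inl w) ↔ G.Adj u w)
    (hAdj₂ : ∀ (u : V) (i : Fin t), G'.Adj (Sum.inl u) (Sum.inr i) ↔ u = v i)
    (hAdj₃ : ∀ i j : Fin t, G'.Adj (Sum.inr i) (Sum.inr j) ↔ i ≠ j)
    {T' : Set (V ⊕ Fin t)} {i j : Fin t} (hij : i ≠ j) (p : G.Walk (v i) (v j))
    (hp : ∀ x ∈ p.support, x ∉ Sum.elim id v '' T') :
    (G'.isolate T').Adj (Sum.inl (v i)) (Sum.inr i) ∧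
      ((G'.isolate T').deleteEdges {s(Sum.inl (v i), Sum.inr i)}).Reachable
        (Sum.inl (v i)) (Sum.inr i) := by
  set K := (G'.isolate T').deleteEdges {s(Sum.inl (v i), Sum.inr i)}
  have hinl : ∀ x ∈ p.support, Sum.inl x ∉ T' := fun x hx hxT => hp x hx ⟨_, hxT, rfl⟩
  have hinri : Sum.inr i ∉ T' := fun hiT => hp _ p.start_mem_support ⟨_, hiT, rfl⟩
  have hinrj : Sum.inr j ∉ T' := fun hjT => hp _ p.end_mem_support ⟨_, hjT, rfl⟩
  let φ : G.induce {x | Sum.inl x ∉ T'} →g K :=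
    ⟨fun x => Sum.inl x.1, fun {x y} hxy => by simpa [K, hAdj₁] using ⟨x.2, y.2, hxy⟩⟩
  have hpK : K.Reachable (Sum.inl (v i)) (Sum.inl (v j)) :=
    (p.induce {x | Sum.inl x ∉ T'} hinl).reachable.map φ
  have hjj' : K.Adj (Sum.inl (v j)) (Sum.inr j) := by
    simp [K, hAdj₂, hinl _ p.end_mem_support, hinrj, hij.symm]
  have hj'i' : K.Adj (Sum.inr j) (Sum.inr i) := by
    simp [K, hAdj₃, hinrj, hinri, hij.symm]
  exact ⟨by simp [hAdj₂, hinl _ p.start_mem_support, hinri],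
    hpK.trans (hjj'.reachable.trans hj'i'.reachable)⟩

end Reduction

theorem multiwayCut_iff_edgeSubsetFVS_general {V : Type} [Fintype V]
    (G : SimpleGraph V) (t k : ℕ) (v : Fin t → V)
    (G' : SimpleGraph (V ⊕ Fin t))
    (hAdj₁ : ∀ u w : V, G'.Adj (Sum.inl u) (Sum.inl w) ↔ G.Adj u w)
    (hAdj₂ : ∀ (u : V) (i : Fin t), G'.Adj (Sum.inl u) (Sum.inr i) ↔ u = v i)
    (hAdj₃ : ∀ i j : Fin t, G'.Adj (Sum.inr i) (Sum.inr j) ↔ i ≠ j)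
    (S : Set (Sym2 (V ⊕ Fin t)))
    (hS : S = {e | ∃ i : Fin t, e = s(Sum.inl (v i), Sum.inr i)}) :
    (∃ T : Set V, T.ncard ≤ k ∧
        ∀ i j : Fin t, i ≠ j →
          ¬ ∃ p : G.Walk (v i) (v j), ∀ x ∈ p.support, x ∉ T) ↔
    (∃ T' : Set (V ⊕ Fin t), T'.ncard ≤ k ∧
        ∀ (w : V ⊕ Fin t) (c : G'.Walk w w), c.IsCycle →
          (∀ x ∈ c.support, x ∉ T') → ∀ e ∈ c.edges, e ∉ S) := by
  subst hS
  constructor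
  · rintro ⟨T, hTk, hT⟩
    refine ⟨Sum.inl '' T, by rwa [Set.ncard_image_of_injective T Sum.inl_injective], ?_⟩
    rintro w c hc hX _ he ⟨i, rfl⟩
    have hvi : v i ∉ T := fun hviT => hX _ (c.fst_mem_support_of_mem_edges he) ⟨_, hviT, rfl⟩
    exact not_reachable_deleteEdges_of_isMultiwayCut hAdj₁ hAdj₂ hT hvi
      (exists_isCycle_avoiding_mem_edges_iff.1 ⟨w, c, hc, hX, he⟩).2
  · rintro ⟨T', hTk, hT'⟩
    refine ⟨Sum.elim id v '' T', (Set.ncard_image_le T'.toFinite).trans hTk, ?_⟩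
    rintro i j hij ⟨p, hp⟩
    obtain ⟨u, c, hc, hX, he⟩ := exists_isCycle_avoiding_mem_edges_iff.2
      (adj_and_reachable_deleteEdges_of_walk hAdj₁ hAdj₂ hAdj₃ hij p hp)
    exact hT' u c hc hX _ he ⟨i, rfl⟩

/-- Reduction of Node Multiway Cut to Edge Subset FVS: `G'` arises
from `G` by adding new vertices `vᵢ'` (here modelled as `Sum.inr i`), the edges
`vᵢvᵢ'`, and all edges `vᵢ'vⱼ'` for `i ≠ j`; `S` consists of the edges `vᵢvᵢ'`.
Then `G` has a multiway cut of the terminals `vᵢ` of size at most `k` iff `G'` has a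
set of at most `k` vertices whose removal leaves no simple cycle through an edge
of `S`. -/
theorem multiwayCut_iff_edgeSubsetFVS {V : Type} [Fintype V]
    (G : SimpleGraph V) (t k : ℕ) (v : Fin t → V) (hv : Function.Injective v)
    (G' : SimpleGraph (V ⊕ Fin t))
    (hAdj₁ : ∀ u w : V, G'.Adj (Sum.inl u) (Sum.inl w) ↔ G.Adj u w)
    (hAdj₂ : ∀ (u : V) (i : Fin t), G'.Adj (Sum.inl u) (Sum.inr i) ↔ u = v i)
    (hAdj₃ : ∀ i j : Fin t, G'.Adj (Sum.inr i) (Sum.inr j) ↔ i ≠ j)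
    (S : Set (Sym2 (V ⊕ Fin t)))
    (hS : S = {e | ∃ i : Fin t, e = s(Sum.inl (v i), Sum.inr i)}) :
    (∃ T : Set V, T.ncard ≤ k ∧
        ∀ i j : Fin t, i ≠ j →
          ¬ ∃ p : G.Walk (v i) (v j), ∀ x ∈ p.support, x ∉ T) ↔
    (∃ T' : Set (V ⊕ Fin t), T'.ncard ≤ k ∧
        ∀ (w : V ⊕ Fin t) (c : G'.Walk w w), c.IsCycle →
          (∀ x ∈ c.support, x ∉ T') → ∀ e ∈ c.edges, e ∉ S) :=
  multiwayCut_iff_edgeSubsetFVS_general G t k v G' hAdj₁ hAdj₂ hAdj₃ S hS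
end

section
/- Let G be a finite simple graph with vertex set V and edge set E, and let S ⊆ E. Let I, K ⊆ V and w' ∈ V be such that: I, K and {w'} are pairwise disjoint; the induced subgraph G[I] is connected; every neighbour of a vertex of I lying outside I belongs to K ∪ {w'}; K induces a clique in G; and no edge of S has both endpoints in I ∪ K. If T ⊆ V is such that the subgraph of G induced on V ∖ T contains no S-cycle, then for T' = (T ∖ I) ∪ {w'} the subgraph of G induced on V ∖ T' also contains no S-cycle; moreover, if T ∩ I ≠ ∅ then |T'| ≤ |T|. -/
/-!
Let `xy ∈ S` be an edge of a cycle avoiding `T' = (T ∖ I) ∪ {w'}`. Neither end lies in `I`: the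
other end would be in `I ∪ K ∪ {w'}`, and `w' ∈ T'`; nor do both lie in `K`. The rest of the cycle
is an `x`–`y` walk avoiding `T'` and the edge `xy`. Since `w' ∈ T'`, each excursion of this walk
into `I` leaves and re-enters through the clique `K`, so it can be replaced by one edge of `K`.
The resulting walk avoids `T` and `xy`, and closes up with `xy` to an `S`-cycle avoiding `T`.
-/

namespace SimpleGraph

variable {V : Type} {G : SimpleGraph V}

def spanningInduce (G : SimpleGraph V) (U : Set V) : SimpleGraph V :=
  ((⊤ : G.Subgraph).induce U).spanningCoe

@[simp]
lemma spanningInduce_adj {U : Set V} {a b : V} :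
    (G.spanningInduce U).Adj a b ↔ a ∈ U ∧ b ∈ U ∧ G.Adj a b := by
  simp [spanningInduce]

lemma spanningInduce_le (U : Set V) : G.spanningInduce U ≤ G :=
  fun _ _ h => (spanningInduce_adj.1 h).2.2

theorem exists_isCycle_support_subset_iff {U : Set V} {x y : V} :
    (∃ (u : V) (c : G.Walk u u), c.IsCycle ∧ (∀ z ∈ c.support, z ∈ U) ∧ s(x, y) ∈ c.edges) ↔
      (G.spanningInduce U).Adj x y ∧
        ((G.spanningInduce U).deleteEdges {s(x, y)}).Reachable x y := by
  rw [adj_and_reachable_delete_edges_iff_exists_cycle]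
  constructor
  · rintro ⟨u, c, hc, hU, he⟩
    have hE : ∀ f ∈ c.edges, f ∈ (G.spanningInduce U).edgeSet := by
      intro f hf
      induction f using Sym2.ind with
      | _ a b => exact spanningInduce_adj.2 ⟨hU a (c.fst_mem_support_of_mem_edges hf),
          hU b (c.snd_mem_support_of_mem_edges hf), c.adj_of_mem_edges hf⟩
    exact ⟨u, c.transfer _ hE, hc.transfer hE, by rwa [Walk.edges_transfer]⟩
  · rintro ⟨u, c, hc, he⟩
    refine ⟨u, c.mapLe (spanningInduce_le U), hc.mapLe _, ?_, by rwa [Walk.edges_mapLe_eq_edges]⟩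
    intro z hz
    rw [Walk.support_mapLe_eq_support, Walk.mem_support_iff_exists_mem_edges_of_not_nil hc.not_nil]
      at hz
    obtain ⟨f, hf, hzf⟩ := hz
    induction f using Sym2.ind with
    | _ a b =>
      obtain ⟨ha, hb, -⟩ := spanningInduce_adj.1 (c.adj_of_mem_edges hf)
      rcases Sym2.mem_iff.1 hzf with rfl | rfl <;> assumption

theorem Walk.reachable_of_isClique_boundary {H H' : SimpleGraph V} {I K : Set V}
    (hout : ∀ a b, a ∉ I → b ∉ I → H.Adj a b → H'.Adj a b)
    (hbdry : ∀ a b, a ∈ I → b ∉ I → H.Adj a b → b ∈ K) (hK : H'.IsClique K)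
    {u v : V} (p : H.Walk u v) (hv : v ∉ I) :
    (u ∉ I → H'.Reachable u v) ∧ (u ∈ I → ∃ b ∈ K, H'.Reachable b v) := by
  induction p with
  | nil => exact ⟨fun _ => .rfl, fun hu => absurd hu hv⟩
  | @cons u u' v h q ih =>
    specialize ih hv
    by_cases hu' : u' ∈ I
    · obtain ⟨b, hbK, hb⟩ := ih.2 hu'
      refine ⟨fun hu => ?_, fun _ => ⟨b, hbK, hb⟩⟩
      have huK := hbdry u' u hu' hu h.symm
      rcases eq_or_ne u b with rfl | hub
      · exact hb
      · exact (hK huK hbK hub).reachable.trans hb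
    · refine ⟨fun hu => (hout u u' hu hu' h).reachable.trans (ih.1 hu'), fun hu => ?_⟩
      exact ⟨u', hbdry u u' hu hu' h, ih.1 hu'⟩

theorem reachable_deleteEdges_of_shift {I K T : Set V} {w' x y : V} {e : Sym2 V}
    (hnbr : ∀ u ∈ I, ∀ x, x ∉ I → G.Adj u x → x ∈ K ∪ {w'})
    (hclique : ∀ a ∈ K, ∀ b ∈ K, a ≠ b → G.Adj a b) (he : ∀ a ∈ K, ∀ b ∈ K, s(a, b) ≠ e)
    (hx : x ∉ I) (hy : y ∉ I)
    (h : ((G.spanningInduce ((T \ I) ∪ {w'})ᶜ).deleteEdges {e}).Reachable x y) :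
    ((G.spanningInduce Tᶜ).deleteEdges {e}).Reachable x y := by
  obtain ⟨p⟩ := h
  refine (p.reachable_of_isClique_boundary (K := K \ T) ?_ ?_ ?_ hy).1 hx
  · simp only [deleteEdges_adj, spanningInduce_adj]
    grind
  · simp only [deleteEdges_adj, spanningInduce_adj]
    grind
  · intro a ha b hb hab
    simp only [deleteEdges_adj, spanningInduce_adj]
    grind

lemma notMem_of_adj_of_mem_of_ne {S : Set (Sym2 V)} {I K : Set V} {w' a b : V}
    (hnbr : ∀ u ∈ I, ∀ x, x ∉ I → G.Adj u x → x ∈ K ∪ {w'})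
    (hSIK : ∀ x y : V, x ∈ I ∪ K → y ∈ I ∪ K → s(x, y) ∉ S)
    (hab : G.Adj a b) (habS : s(a, b) ∈ S) (hb : b ≠ w') : a ∉ I := by
  intro ha
  by_cases hbI : b ∈ I
  · exact hSIK a b (.inl ha) (.inl hbI) habS
  · rcases hnbr a ha b hbI hab with hbK | hbw
    · exact hSIK a b (.inl ha) (.inr hbK) habS
    · exact hb hbw

end SimpleGraph

lemma Set.ncard_diff_union_singleton_le {α : Type*} {T I : Set α} (w : α)
    (hT : T.Finite) (hTI : (T ∩ I).Nonempty) : ((T \ I) ∪ {w}).ncard ≤ T.ncard := by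
  obtain ⟨z, hzT, hzI⟩ := hTI
  calc ((T \ I) ∪ {w}).ncard ≤ (T \ I).ncard + 1 := by
        simpa using Set.ncard_union_le (T \ I) {w}
    _ ≤ T.ncard := Set.ncard_lt_ncard ⟨Set.sdiff_subset, fun h => (h hzT).2 hzI⟩ hT

open SimpleGraph

theorem clique_bubble_shift_general {V : Type} [Fintype V]
    (G : SimpleGraph V) (S : Set (Sym2 V))
    (I K : Set V) (w' : V)
    (hnbr : ∀ u ∈ I, ∀ x, x ∉ I → G.Adj u x → x ∈ K ∪ {w'})
    (hclique : ∀ a ∈ K, ∀ b ∈ K, a ≠ b → G.Adj a b)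
    (hSIK : ∀ x y : V, x ∈ I ∪ K → y ∈ I ∪ K → s(x, y) ∉ S)
    (T : Set V)
    (hhit : ∀ (w : V) (c : G.Walk w w), c.IsCycle → (∀ x ∈ c.support, x ∉ T) →
      ∀ e ∈ c.edges, e ∉ S) :
    (∀ (w : V) (c : G.Walk w w), c.IsCycle →
        (∀ x ∈ c.support, x ∉ (T \ I) ∪ {w'}) → ∀ e ∈ c.edges, e ∉ S) ∧
      ((T ∩ I).Nonempty → ((T \ I) ∪ {w'}).ncard ≤ T.ncard) := by
  refine ⟨?_, Set.ncard_diff_union_singleton_le w' T.toFinite⟩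
  intro w c hc hT' e he heS
  induction e using Sym2.ind with | _ x y => ?_
  have hxy := c.adj_of_mem_edges he
  have hx' := hT' x (c.fst_mem_support_of_mem_edges he)
  have hy' := hT' y (c.snd_mem_support_of_mem_edges he)
  have hxI := notMem_of_adj_of_mem_of_ne hnbr hSIK hxy heS fun h => hy' (.inr h)
  have hyI := notMem_of_adj_of_mem_of_ne hnbr hSIK hxy.symm (Sym2.eq_swap ▸ heS)
    fun h => hx' (.inr h)
  have heK : ∀ a ∈ K, ∀ b ∈ K, s(a, b) ≠ s(x, y) := fun a ha b hb h =>
    hSIK a b (.inr ha) (.inr hb) (h ▸ heS)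
  obtain ⟨-, hr⟩ := exists_isCycle_support_subset_iff.1 ⟨w, c, hc, hT', he⟩
  have hadj : (G.spanningInduce Tᶜ).Adj x y :=
    spanningInduce_adj.2 ⟨fun h => hx' (.inl ⟨h, hxI⟩), fun h => hy' (.inl ⟨h, hyI⟩), hxy⟩
  obtain ⟨u, c', hc', hT, he'⟩ := exists_isCycle_support_subset_iff.2
    ⟨hadj, reachable_deleteEdges_of_shift hnbr hclique heK hxI hyI hr⟩
  exact hhit u c' hc' hT _ he' heS

/-- (Clique bubble shifting.) Let `I`, `K` and `{w'}` be pairwise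
disjoint, `G[I]` connected, all neighbours of `I` outside `I` lying in `K ∪ {w'}`,
`K` a clique, and no edge of `S` with both endpoints in `I ∪ K`. If `T` hits all
`S`-cycles then so does `T' = (T ∖ I) ∪ {w'}`; moreover if `T ∩ I ≠ ∅` then
`|T'| ≤ |T|`. -/
theorem clique_bubble_shift {V : Type} [Fintype V]
    (G : SimpleGraph V) (S : Set (Sym2 V)) (hS : S ⊆ G.edgeSet)
    (I K : Set V) (w' : V)
    (hIK : Disjoint I K) (hwI : w' ∉ I) (hwK : w' ∉ K)
    (hconn : (G.induce I).Connected)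
    (hnbr : ∀ u ∈ I, ∀ x, x ∉ I → G.Adj u x → x ∈ K ∪ {w'})
    (hclique : ∀ a ∈ K, ∀ b ∈ K, a ≠ b → G.Adj a b)
    (hSIK : ∀ x y : V, x ∈ I ∪ K → y ∈ I ∪ K → s(x, y) ∉ S)
    (T : Set V)
    (hhit : ∀ (w : V) (c : G.Walk w w), c.IsCycle → (∀ x ∈ c.support, x ∉ T) →
      ∀ e ∈ c.edges, e ∉ S) :
    (∀ (w : V) (c : G.Walk w w), c.IsCycle →
        (∀ x ∈ c.support, x ∉ (T \ I) ∪ {w'}) → ∀ e ∈ c.edges, e ∉ S) ∧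
      ((T ∩ I).Nonempty → ((T \ I) ∪ {w'}).ncard ≤ T.ncard) :=
  clique_bubble_shift_general G S I K w' hnbr hclique hSIK T hhit
end
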